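/- A finite-outcome POVM A = (a_x)_{x∈X} on a finite-dimensional Hilbert space is a PVM (each a_x is a projection) if and only if A is completely intersubjective, i.e., every coarse-graining of A is intersubjective. Here a coarse-graining of A along a map π: X → Y is the POVM B = (b_y)_{y∈Y} with b_y = ∑_{x∈π⁻¹(y)} a_x, and a POVM B is intersubjective if every POVM (c_{y,y'}) on Y×Y with both marginals equal to B satisfies ∑_y c_{y,y} = 1. -/

import Mathlib

open scoped ComplexOrder

open Finset

/-- A finite-outcome POVM: positive semidefinite operators summing to the identity. -/
def IsPOVM {X : Type*} [Fintype X] {n : ℕ} (A : X → Matrix (Fin n) (Fin n) ℂ) : Prop :=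
  (∀ x, (A x).PosSemidef) ∧ ∑ x, A x = 1

/-- A POVM `B` is intersubjective if every joint POVM of `B` with itself has diagonal
summing to the identity. -/
def POVMIntersubjective {Y : Type*} [Fintype Y] {n : ℕ}
    (B : Y → Matrix (Fin n) (Fin n) ℂ) : Prop :=
  ∀ C : Y × Y → Matrix (Fin n) (Fin n) ℂ, IsPOVM C →
    (∀ y, ∑ y', C (y, y') = B y) → (∀ y', ∑ y, C (y, y') = B y') →
    ∑ y, C (y, y) = 1

/-!
If the effects of `A` are projections, they are pairwise orthogonal (`a' ≤ 1 - a` and `1 - a` is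
a projection), so every coarse-graining is again a PVM. For a PVM `B`, an entry of a joint POVM
`C` of `B` with itself satisfies `C (y, y') ≤ B y` and `C (y, y') ≤ B y'`; a positive operator
below a projection is absorbed by it, so `C (y, y') = B y' * B y * C (y, y') = 0` off the
diagonal. Conversely, coarse-graining along `x' ↦ (x' = x)` gives the two-outcome POVM
`{a, 1 - a}` with `a = A x`. Its effects commute, so their pairwise products form a joint POVM,
and intersubjectivity yields `a ^ 2 + (1 - a) ^ 2 = 1`, i.e. `a (1 - a) = 0`.
-/

-- The L2 operator norm is never used directly: it makes matrices a C⋆-algebra, where absorption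
-- by projections and positivity of commuting products are available.
open scoped MatrixOrder Matrix.Norms.L2Operator

variable {n : ℕ}

def coarseGrain {X Y : Type*} [Fintype X] [DecidableEq Y] (A : X → Matrix (Fin n) (Fin n) ℂ)
    (π : X → Y) (y : Y) : Matrix (Fin n) (Fin n) ℂ :=
  ∑ x ∈ univ.filter (fun x => π x = y), A x

namespace IsPOVM

variable {X : Type*} [Fintype X] {A : X → Matrix (Fin n) (Fin n) ℂ}

lemma nonneg (hA : IsPOVM A) (x : X) : 0 ≤ A x := (hA.1 x).nonneg

lemma le_one (hA : IsPOVM A) (x : X) : A x ≤ 1 :=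
  hA.2 ▸ single_le_sum (fun x _ => hA.nonneg x) (mem_univ x)

lemma le_one_sub (hA : IsPOVM A) {x x' : X} (h : x ≠ x') : A x' ≤ 1 - A x := by
  classical
  rw [le_sub_iff_add_le', ← hA.2, ← sum_pair h]
  exact sum_le_univ_sum_of_nonneg hA.nonneg

lemma mul_eq_zero_of_isStarProjection (hA : IsPOVM A) (hP : ∀ x, IsStarProjection (A x))
    {x x' : X} (h : x ≠ x') : A x * A x' = 0 := by
  have absorb := ((hP x).one_sub.mul_right_and_mul_left_of_nonneg_of_le (hA.nonneg x')
    (hA.le_one_sub h)).2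
  rwa [sub_mul, one_mul, sub_eq_self] at absorb

protected lemma coarseGrain {Y : Type*} [Fintype Y] [DecidableEq Y] (hA : IsPOVM A)
    (π : X → Y) : IsPOVM (coarseGrain A π) :=
  ⟨fun _ => Matrix.posSemidef_sum _ fun x _ => hA.1 x, by
    unfold _root_.coarseGrain; rw [sum_fiberwise, hA.2]⟩

lemma isStarProjection_coarseGrain {Y : Type*} [DecidableEq Y] (hA : IsPOVM A)
    (hP : ∀ x, IsStarProjection (A x)) (π : X → Y) (y : Y) :
    IsStarProjection (coarseGrain A π y) := by
  refine ⟨?_, isSelfAdjoint_sum _ fun x _ => (hP x).isSelfAdjoint⟩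
  rw [IsIdempotentElem, coarseGrain, sum_mul_sum]
  refine sum_congr rfl fun x hx => ?_
  rw [sum_eq_single_of_mem x hx fun x' _ h => hA.mul_eq_zero_of_isStarProjection hP h.symm]
  exact (hP x).isIdempotentElem

lemma intersubjective_of_isStarProjection (hA : IsPOVM A) (hP : ∀ x, IsStarProjection (A x)) :
    POVMIntersubjective A := by
  intro C hC hrow hcol
  have off_diagonal : ∀ x x', x ≠ x' → C (x, x') = 0 := by
    intro x x' h
    have le_row : C (x, x') ≤ A x :=
      hrow x ▸ single_le_sum (fun z _ => hC.nonneg (x, z)) (mem_univ x')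
    have le_col : C (x, x') ≤ A x' :=
      hcol x' ▸ single_le_sum (fun z _ => hC.nonneg (z, x')) (mem_univ x)
    have absorb_row := ((hP x).mul_right_and_mul_left_of_nonneg_of_le (hC.nonneg _) le_row).2
    have absorb_col := ((hP x').mul_right_and_mul_left_of_nonneg_of_le (hC.nonneg _) le_col).2
    calc C (x, x') = A x' * A x * C (x, x') := by rw [mul_assoc, absorb_row, absorb_col]
      _ = 0 := by rw [hA.mul_eq_zero_of_isStarProjection hP h.symm, zero_mul]
  calc ∑ x, C (x, x) = ∑ x, ∑ x', C (x, x') :=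
        sum_congr rfl fun x _ => (Fintype.sum_eq_single x fun x' h => off_diagonal x x' h.symm).symm
    _ = 1 := by rw [← Fintype.sum_prod_type', hC.2]

lemma isStarProjection_of_intersubjective (hA : IsPOVM A)
    (hcomm : ∀ x x', Commute (A x) (A x')) (hI : POVMIntersubjective A) (x : X) :
    IsStarProjection (A x) := by
  have joint : IsPOVM fun p : X × X => A p.1 * A p.2 :=
    ⟨fun p => Matrix.nonneg_iff_posSemidef.1 <|
      (hcomm p.1 p.2).mul_nonneg (hA.nonneg _) (hA.nonneg _), by
      rw [Fintype.sum_prod_type, ← sum_mul_sum, hA.2, one_mul]⟩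
  have sum_sq : ∑ x, A x * A x = ∑ x, A x :=
    (hI _ joint (fun x => by dsimp only; rw [← mul_sum, hA.2, mul_one])
      (fun x => by dsimp only; rw [← sum_mul, hA.2, one_mul])).trans hA.2.symm
  have defect_nonneg : ∀ x, 0 ≤ A x - A x * A x := fun x => by
    rw [← mul_one_sub]
    exact ((Commute.one_right _).sub_right (Commute.refl _)).mul_nonneg (hA.nonneg x)
      (sub_nonneg.2 (hA.le_one x))
  have defect_eq_zero := (sum_eq_zero_iff_of_nonneg fun x _ => defect_nonneg x).1
    (by rw [sum_sub_distrib, sum_sq, sub_self]) x (mem_univ x)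
  exact ⟨(sub_eq_zero.1 defect_eq_zero).symm, (hA.1 x).isHermitian⟩

lemma commute_of_bool {A : Bool → Matrix (Fin n) (Fin n) ℂ} (hA : IsPOVM A) (b b' : Bool) :
    Commute (A b) (A b') := by
  have h_false : A false = 1 - A true := by rw [← hA.2, Fintype.sum_bool]; abel
  have h : Commute (A false) (A true) := h_false ▸ (Commute.one_left _).sub_left (Commute.refl _)
  cases b <;> cases b'
  exacts [Commute.refl _, h, h.symm, Commute.refl _]

end IsPOVM

theorem pvm_iff_completely_intersubjective {n : ℕ} {X : Type*} [Fintype X]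
    (A : X → Matrix (Fin n) (Fin n) ℂ) (hA : IsPOVM A) :
    (∀ x, A x * A x = A x) ↔
      ∀ (Y : Type) [Fintype Y] [DecidableEq Y] (π : X → Y),
        POVMIntersubjective (fun y => ∑ x ∈ univ.filter (fun x => π x = y), A x) := by
  classical
  constructor
  · intro hproj Y _ _ π
    have hP : ∀ x, IsStarProjection (A x) := fun x => ⟨hproj x, (hA.1 x).isHermitian⟩
    exact (hA.coarseGrain π).intersubjective_of_isStarProjection
      (hA.isStarProjection_coarseGrain hP π)
  · intro h x
    let π : X → Bool := fun x' => decide (x' = x)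
    have hB := hA.coarseGrain π
    have fiber_true : coarseGrain A π true = A x := by simp [coarseGrain, π, sum_filter]
    have hP := hB.isStarProjection_of_intersubjective hB.commute_of_bool (h Bool π) true
    rw [fiber_true] at hP
    exact hP.isIdempotentElem
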